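/- Let X be a graph with a finite homological isoperimetric function with parameters R₀ and super-additive function θ₀. Then for every R ≥ R₀: (1) every 1-cycle b ∈ C_1^R(X) ∩ B_1(X) lies in B_1^R(X) = ∂C_2^R(X); (2) every b ∈ B_1^R(X) with integer coefficients satisfies ‖b‖_F^R ≤ θ(R·‖b‖₁) where θ(s) = θ₀(3s) + 5s. -/

import Mathlib

open Finsupp

variable {V : Type*}

/-- 0-chains. -/
abbrev C0 (V : Type*) := V →₀ ℝ
/-- 1-chains: free real vector space on ordered pairs of vertices. -/
abbrev C1 (V : Type*) := (V × V) →₀ ℝ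
/-- 2-chains: free real vector space on ordered triples of vertices. -/
abbrev C2 (V : Type*) := (V × V × V) →₀ ℝ
/-- 3-chains. -/
abbrev C3 (V : Type*) := (V × V × V × V) →₀ ℝ

/-- ℓ¹-norm of a finitely supported chain. -/
noncomputable def l1 {α : Type*} (c : α →₀ ℝ) : ℝ := c.support.sum fun t => |c t|

/-- Boundary map ∂ : C₂ → C₁, (x₀,x₁,x₂) ↦ (x₁,x₂) − (x₀,x₂) + (x₀,x₁). -/
noncomputable def bdry2 : C2 V →ₗ[ℝ] C1 V :=
  Finsupp.lsum ℝ fun t => LinearMap.toSpanSingleton ℝ (C1 V)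
    (single (t.2.1, t.2.2) 1 - single (t.1, t.2.2) 1 + single (t.1, t.2.1) 1)

/-- Boundary map ∂ : C₁ → C₀, (x₀,x₁) ↦ x₁ − x₀. -/
noncomputable def bdry1 : C1 V →ₗ[ℝ] C0 V :=
  Finsupp.lsum ℝ fun t => LinearMap.toSpanSingleton ℝ (C0 V)
    (single t.2 1 - single t.1 1)

/-- Boundary map ∂ : C₃ → C₂. -/
noncomputable def bdry3 : C3 V →ₗ[ℝ] C2 V :=
  Finsupp.lsum ℝ fun t => LinearMap.toSpanSingleton ℝ (C2 V)
    (single (t.2.1, t.2.2.1, t.2.2.2) 1 - single (t.1, t.2.2.1, t.2.2.2) 1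
      + single (t.1, t.2.1, t.2.2.2) 1 - single (t.1, t.2.1, t.2.2.1) 1)

/-- Two vertices are at (finite) distance at most R. -/
def pairOK (G : SimpleGraph V) (R : ℕ) (a b : V) : Prop :=
  G.Reachable a b ∧ G.dist a b ≤ R

/-- Membership in C₁^R : supported on pairs at distance ≤ R. -/
def memC1R (G : SimpleGraph V) (R : ℕ) (c : C1 V) : Prop :=
  ∀ t ∈ c.support, pairOK G R t.1 t.2

/-- Membership in C₂^R : supported on triples of diameter ≤ R. -/
def memC2R (G : SimpleGraph V) (R : ℕ) (c : C2 V) : Prop :=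
  ∀ t ∈ c.support, pairOK G R t.1 t.2.1 ∧ pairOK G R t.1 t.2.2 ∧ pairOK G R t.2.1 t.2.2

/-- Membership in B₁^R = ∂C₂^R. -/
def memB1R (G : SimpleGraph V) (R : ℕ) (b : C1 V) : Prop :=
  ∃ a : C2 V, memC2R G R a ∧ bdry2 a = b

/-- The filling norm ‖b‖_F^R = inf of ℓ¹-norms of fillings in C₂^R. -/
noncomputable def fillNorm (G : SimpleGraph V) (R : ℕ) (b : C1 V) : ℝ :=
  sInf {r | ∃ a : C2 V, memC2R G R a ∧ bdry2 a = b ∧ r = l1 a}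

/-- The 1-chain c(p) associated to a walk p. -/
noncomputable def walkChain (G : SimpleGraph V) {x y : V} (p : G.Walk x y) : C1 V :=
  (p.darts.map fun d => single d.toProd (1 : ℝ)).sum

/-- A walk is geodesic if its length realizes the distance of its endpoints. -/
def IsGeodesicWalk (G : SimpleGraph V) {x y : V} (p : G.Walk x y) : Prop :=
  p.length = G.dist x y

/-- Geodesic triangles of G are n-slim. -/
def SlimTriangles (G : SimpleGraph V) (n : ℕ) : Prop :=
  ∀ (x y z : V) (p : G.Walk x y) (q : G.Walk y z) (r : G.Walk x z),
    IsGeodesicWalk G p → IsGeodesicWalk G q → IsGeodesicWalk G r →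
    (∀ v ∈ p.support, ∃ w, (w ∈ q.support ∨ w ∈ r.support) ∧ G.dist v w ≤ n) ∧
    (∀ v ∈ q.support, ∃ w, (w ∈ p.support ∨ w ∈ r.support) ∧ G.dist v w ≤ n) ∧
    (∀ v ∈ r.support, ∃ w, (w ∈ p.support ∨ w ∈ q.support) ∧ G.dist v w ≤ n)

/-- A real chain has integer coefficients. -/
def IntCoeffs {α : Type*} (c : α →₀ ℝ) : Prop := ∀ t, ∃ n : ℤ, c t = n

/-- X has a finite homological isoperimetric function with parameters R₀, θ :
for every closed path p, c(p) ∈ B₁^{R₀} and ‖c(p)‖_F^{R₀} ≤ θ(length p). -/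
def FinHomIsop (G : SimpleGraph V) (R₀ : ℕ) (θ : ℕ → ℝ) : Prop :=
  ∀ (x : V) (p : G.Walk x x), memB1R G R₀ (walkChain G p) ∧
    fillNorm G R₀ (walkChain G p) ≤ θ p.length

/-- A 2-cochain is bounded on each C₂^R. -/
def Bdd2 {W : Type*} [NormedAddCommGroup W] [NormedSpace ℝ W]
    (G : SimpleGraph V) (f : C2 V →ₗ[ℝ] W) : Prop :=
  ∀ R : ℕ, ∃ M : ℝ, ∀ c : C2 V, memC2R G R c → ‖f c‖ ≤ M * l1 c

/-- A 1-cochain is bounded on each C₁^R. -/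
def Bdd1 {W : Type*} [NormedAddCommGroup W] [NormedSpace ℝ W]
    (G : SimpleGraph V) (f : C1 V →ₗ[ℝ] W) : Prop :=
  ∀ R : ℕ, ∃ M : ℝ, ∀ c : C1 V, memC1R G R c → ‖f c‖ ≤ M * l1 c

/-- A Banach space is 1-injective: bounded linear maps into it extend from
subspaces of normed spaces with the same norm. -/
def IsOneInjective (W : Type*) [NormedAddCommGroup W] [NormedSpace ℝ W] : Prop :=
  ∀ (E : Type) [NormedAddCommGroup E] [NormedSpace ℝ E],
    ∀ (p : Subspace ℝ E) (φ : p →L[ℝ] W),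
      ∃ ψ : E →L[ℝ] W, (∀ x : p, ψ x = φ x) ∧ ‖ψ‖ ≤ ‖φ‖

/-!
Every chain `b ∈ C₁^R` is homologous in `C₂^R`, at cost `(R + 3)‖b‖₁`, to a nonnegative chain `d`
on the edges of the graph with `‖d‖₁ ≤ R‖b‖₁`: a pair `(x, y)` is traded for a geodesic from `x`
to `y` by coning the geodesic off from `x`, and a negative coefficient on `(x, y)` for a positive
one on `(y, x)`. If `b` is a cycle, so is `d`, and subtracting from `d` a simple closed walk in its
support, weighted by the least coefficient of `d` along it, kills an edge of the support. Hence
`d` is a nonnegative combination of closed walks, which bound in `C₂^{R₀}` by hypothesis. When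
`d` is integral the weights are natural numbers and the walks have total length `‖d‖₁`, so
super-additivity bounds the cost of filling `d` by `θ₀ ‖d‖₁`.
-/

section L1

variable {α : Type*}

lemma l1_nonneg (c : α →₀ ℝ) : 0 ≤ l1 c :=
  Finset.sum_nonneg fun _ _ => abs_nonneg _

lemma l1_eq_sum_of_support_subset (c : α →₀ ℝ) {s : Finset α} (hs : c.support ⊆ s) :
    l1 c = ∑ t ∈ s, |c t| :=
  Finset.sum_subset hs fun t _ ht => by simp [Finsupp.notMem_support_iff.mp ht]

@[simp] lemma l1_zero : l1 (0 : α →₀ ℝ) = 0 := by simp [l1]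

@[simp] lemma l1_single (t : α) (r : ℝ) : l1 (single t r) = |r| := by
  classical
  rw [l1_eq_sum_of_support_subset _ Finsupp.support_single_subset]
  simp

lemma l1_smul (r : ℝ) (c : α →₀ ℝ) : l1 (r • c) = |r| * l1 c := by
  rcases eq_or_ne r 0 with rfl | hr
  · simp
  rw [l1, Finsupp.support_smul_eq hr, l1, Finset.mul_sum]
  simp [abs_mul]

@[simp] lemma l1_neg (c : α →₀ ℝ) : l1 (-c) = l1 c := by
  simpa using l1_smul (-1) c

lemma l1_add_le (a b : α →₀ ℝ) : l1 (a + b) ≤ l1 a + l1 b := by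
  classical
  rw [l1_eq_sum_of_support_subset (a + b) Finsupp.support_add,
    l1_eq_sum_of_support_subset a Finset.subset_union_left,
    l1_eq_sum_of_support_subset b Finset.subset_union_right, ← Finset.sum_add_distrib]
  exact Finset.sum_le_sum fun t _ => abs_add_le (a t) (b t)

lemma l1_sub_le (a b : α →₀ ℝ) : l1 (a - b) ≤ l1 a + l1 b := by
  simpa [sub_eq_add_neg] using l1_add_le a (-b)

lemma l1_add_of_nonneg {a b : α →₀ ℝ} (ha : ∀ t, 0 ≤ a t) (hb : ∀ t, 0 ≤ b t) :
    l1 (a + b) = l1 a + l1 b := by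
  classical
  rw [l1_eq_sum_of_support_subset (a + b) Finsupp.support_add,
    l1_eq_sum_of_support_subset a Finset.subset_union_left,
    l1_eq_sum_of_support_subset b Finset.subset_union_right, ← Finset.sum_add_distrib]
  refine Finset.sum_congr rfl fun t _ => ?_
  simp [abs_of_nonneg, ha t, hb t, add_nonneg]

lemma l1_add_of_disjoint {a b : α →₀ ℝ} (h : Disjoint a.support b.support) :
    l1 (a + b) = l1 a + l1 b := by
  classical
  rw [l1, Finsupp.support_add_eq h, Finset.sum_union h, l1, l1]
  congr 1 <;> refine Finset.sum_congr rfl fun t ht => ?_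
  · simp [Finsupp.notMem_support_iff.mp (Finset.disjoint_left.mp h ht)]
  · simp [Finsupp.notMem_support_iff.mp (Finset.disjoint_right.mp h ht)]

end L1

section UnitChain

variable {α : Type*}

noncomputable def unitChain (l : List α) : α →₀ ℝ := (l.map fun a => single a 1).sum

@[simp] lemma unitChain_nil : unitChain ([] : List α) = 0 := rfl

@[simp] lemma unitChain_cons (a : α) (l : List α) :
    unitChain (a :: l) = single a 1 + unitChain l := by
  simp [unitChain]

lemma unitChain_apply [BEq α] [LawfulBEq α] (l : List α) (a : α) :
    unitChain l a = l.count a := by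
  classical
  induction l with
  | nil => simp
  | cons b l ih => simp [ih, Finsupp.single_apply, List.count_cons, add_comm]

lemma unitChain_nonneg (l : List α) (a : α) : 0 ≤ unitChain l a := by
  classical
  simp [unitChain_apply]

lemma l1_unitChain (l : List α) : l1 (unitChain l) = l.length := by
  induction l with
  | nil => simp
  | cons a l ih =>
    classical
    have hsingle (t : α) : 0 ≤ single a (1 : ℝ) t := by
      rw [Finsupp.single_apply]; split <;> simp
    rw [unitChain_cons, l1_add_of_nonneg hsingle (unitChain_nonneg l), l1_single, ih]
    simp [add_comm]

lemma unitChain_mem_supported {l : List α} {s : Set α} (h : ∀ a ∈ l, a ∈ s) :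
    unitChain l ∈ Finsupp.supported ℝ ℝ s := by
  induction l with
  | nil => exact zero_mem _
  | cons a l ih =>
    rw [unitChain_cons]
    exact add_mem (Finsupp.single_mem_supported ℝ 1 (h a List.mem_cons_self))
      (ih fun b hb => h b (List.mem_cons_of_mem a hb))

end UnitChain

section Boundary

lemma bdry2_single (t : V × V × V) (r : ℝ) :
    bdry2 (single t r) =
      r • (single (t.2.1, t.2.2) (1 : ℝ) - single (t.1, t.2.2) 1 + single (t.1, t.2.1) 1) := by
  simp [bdry2]

lemma bdry1_single (t : V × V) (r : ℝ) :
    bdry1 (single t r) = r • (single t.2 (1 : ℝ) - single t.1 1) := by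
  simp [bdry1]

lemma bdry1_apply [DecidableEq V] (c : C1 V) (v : V) :
    bdry1 c v =
      ∑ t ∈ c.support, c t * ((if t.2 = v then 1 else 0) - if t.1 = v then 1 else 0) := by
  simp [bdry1, Finsupp.lsum_apply, Finsupp.sum, Finsupp.single_apply]

@[simp] lemma bdry1_bdry2 (c : C2 V) : bdry1 (bdry2 c) = 0 := by
  induction c using Finsupp.induction_linear with
  | zero => simp
  | add a b ha hb => simp [ha, hb]
  | single t r =>
    simp only [bdry2_single, map_smul, map_add, map_sub, bdry1_single, one_smul]
    rw [smul_eq_zero]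
    right
    abel

end Boundary

section Radius

variable (G : SimpleGraph V) (R : ℕ)

-- Membership in these submodules unfolds to `memC1R`, `memC2R` and `memB1R`.
noncomputable def C1R : Submodule ℝ (C1 V) := Finsupp.supported ℝ ℝ {t | pairOK G R t.1 t.2}

noncomputable def C2R : Submodule ℝ (C2 V) :=
  Finsupp.supported ℝ ℝ
    {t | pairOK G R t.1 t.2.1 ∧ pairOK G R t.1 t.2.2 ∧ pairOK G R t.2.1 t.2.2}

noncomputable def B1R : Submodule ℝ (C1 V) := (C2R G R).map bdry2

variable {G R}

lemma pairOK_self (x : V) : pairOK G R x x :=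
  ⟨.refl x, by simp⟩

lemma pairOK.symm {x y : V} (h : pairOK G R x y) : pairOK G R y x :=
  ⟨h.1.symm, G.dist_comm ▸ h.2⟩

lemma pairOK.mono {R' : ℕ} (hR : R ≤ R') {x y : V} (h : pairOK G R x y) : pairOK G R' x y :=
  ⟨h.1, h.2.trans hR⟩

lemma pairOK_of_adj (hR : 1 ≤ R) {x y : V} (h : G.Adj x y) : pairOK G R x y :=
  ⟨h.reachable, by simpa [SimpleGraph.dist_eq_one_iff_adj.mpr h] using hR⟩

lemma pairOK_of_mem_support {x y v : V} {p : G.Walk x y} (hv : v ∈ p.support)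
    (hp : p.length ≤ R) : pairOK G R x v := by
  classical
  exact ⟨⟨p.takeUntil v hv⟩,
    (G.dist_le _).trans ((p.length_takeUntil_le_length hv).trans hp)⟩

lemma single_mem_C2R {t : V × V × V} (h₁ : pairOK G R t.1 t.2.1) (h₂ : pairOK G R t.1 t.2.2)
    (h₃ : pairOK G R t.2.1 t.2.2) (r : ℝ) : single t r ∈ C2R G R :=
  Finsupp.single_mem_supported ℝ r ⟨h₁, h₂, h₃⟩

lemma single_self_mem_C2R (x : V) (r : ℝ) : single (x, x, x) r ∈ C2R G R :=
  single_mem_C2R (pairOK_self x) (pairOK_self x) (pairOK_self x) r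

lemma C2R_mono {R' : ℕ} (hR : R ≤ R') : C2R G R ≤ C2R G R' :=
  Finsupp.supported_mono fun _ ⟨h₁, h₂, h₃⟩ => ⟨h₁.mono hR, h₂.mono hR, h₃.mono hR⟩

lemma B1R_mono {R' : ℕ} (hR : R ≤ R') : B1R G R ≤ B1R G R' :=
  Submodule.map_mono (C2R_mono hR)

lemma B1R_le_C1R : B1R G R ≤ C1R G R := by
  rw [B1R, Submodule.map_le_iff_le_comap, C2R, Finsupp.supported_eq_span_single,
    Submodule.span_le]
  rintro _ ⟨t, ⟨h₁, h₂, h₃⟩, rfl⟩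
  simp only [SetLike.mem_coe, Submodule.mem_comap, bdry2_single, one_smul]
  exact add_mem (sub_mem (Finsupp.single_mem_supported ℝ _ h₃)
    (Finsupp.single_mem_supported ℝ _ h₂)) (Finsupp.single_mem_supported ℝ _ h₁)

end Radius

section FillNorm

variable {G : SimpleGraph V} {R : ℕ}

lemma fillNorm_le {a : C2 V} (ha : a ∈ C2R G R) : fillNorm G R (bdry2 a) ≤ l1 a :=
  csInf_le ⟨0, by rintro _ ⟨a', -, -, rfl⟩; exact l1_nonneg a'⟩ ⟨a, ha, rfl, rfl⟩

lemma le_fillNorm {b : C1 V} (hb : b ∈ B1R G R) {x : ℝ}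
    (h : ∀ a ∈ C2R G R, bdry2 a = b → x ≤ l1 a) : x ≤ fillNorm G R b := by
  obtain ⟨a, ha, rfl⟩ := hb
  exact le_csInf ⟨l1 a, a, ha, rfl, rfl⟩ (by rintro _ ⟨a', ha', hab, rfl⟩; exact h a' ha' hab)

lemma fillNorm_add_le {b₁ b₂ : C1 V} (h₁ : b₁ ∈ B1R G R) (h₂ : b₂ ∈ B1R G R) :
    fillNorm G R (b₁ + b₂) ≤ fillNorm G R b₁ + fillNorm G R b₂ := by
  suffices fillNorm G R (b₁ + b₂) - fillNorm G R b₂ ≤ fillNorm G R b₁ by linarith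
  refine le_fillNorm h₁ fun a₁ ha₁ hab₁ => ?_
  suffices fillNorm G R (b₁ + b₂) - l1 a₁ ≤ fillNorm G R b₂ by linarith
  refine le_fillNorm h₂ fun a₂ ha₂ hab₂ => ?_
  have := fillNorm_le (add_mem ha₁ ha₂)
  rw [map_add, hab₁, hab₂] at this
  linarith [l1_add_le a₁ a₂]

lemma fillNorm_smul_le (r : ℝ) {b : C1 V} (hb : b ∈ B1R G R) :
    fillNorm G R (r • b) ≤ |r| * fillNorm G R b := by
  rcases eq_or_ne r 0 with rfl | hr
  · simpa using fillNorm_le (Submodule.zero_mem (C2R G R))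
  rw [← div_le_iff₀' (abs_pos.mpr hr)]
  refine le_fillNorm hb fun a ha hab => ?_
  rw [div_le_iff₀' (abs_pos.mpr hr), ← l1_smul, ← hab, ← map_smul]
  exact fillNorm_le (Submodule.smul_mem _ r ha)

lemma fillNorm_anti {R' : ℕ} (hR : R ≤ R') {b : C1 V} (hb : b ∈ B1R G R) :
    fillNorm G R' b ≤ fillNorm G R b :=
  le_fillNorm hb fun _ ha hab => hab ▸ fillNorm_le (C2R_mono hR ha)

end FillNorm

def Fillable (G : SimpleGraph V) (R : ℕ) (c : ℝ) (b : C1 V) : Prop :=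
  b ∈ B1R G R ∧ fillNorm G R b ≤ c

namespace Fillable

variable {G : SimpleGraph V} {R : ℕ} {c c₁ c₂ : ℝ} {b b₁ b₂ : C1 V}

lemma of_bdry2 {a : C2 V} (ha : a ∈ C2R G R) : Fillable G R (l1 a) (bdry2 a) :=
  ⟨⟨a, ha, rfl⟩, fillNorm_le ha⟩

lemma zero : Fillable G R 0 0 := by
  simpa using of_bdry2 (Submodule.zero_mem (C2R G R))

lemma mono {c' : ℝ} (h : Fillable G R c b) (hc : c ≤ c') : Fillable G R c' b :=
  ⟨h.1, h.2.trans hc⟩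

lemma add (h₁ : Fillable G R c₁ b₁) (h₂ : Fillable G R c₂ b₂) :
    Fillable G R (c₁ + c₂) (b₁ + b₂) :=
  ⟨add_mem h₁.1 h₂.1, (fillNorm_add_le h₁.1 h₂.1).trans (add_le_add h₁.2 h₂.2)⟩

lemma smul (r : ℝ) (h : Fillable G R c b) : Fillable G R (|r| * c) (r • b) :=
  ⟨Submodule.smul_mem _ r h.1,
    (fillNorm_smul_le r h.1).trans (mul_le_mul_of_nonneg_left h.2 (abs_nonneg r))⟩

lemma sub (h₁ : Fillable G R c₁ b₁) (h₂ : Fillable G R c₂ b₂) :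
    Fillable G R (c₁ + c₂) (b₁ - b₂) := by
  simpa [sub_eq_add_neg] using h₁.add (h₂.smul (-1))

lemma of_le {R' : ℕ} (hR : R ≤ R') (h : Fillable G R c b) : Fillable G R' c b :=
  ⟨B1R_mono hR h.1, (fillNorm_anti hR h.1).trans h.2⟩

end Fillable

section Walks

variable {G : SimpleGraph V}

lemma walkChain_eq_unitChain {x y : V} (p : G.Walk x y) :
    walkChain G p = unitChain (p.darts.map SimpleGraph.Dart.toProd) := by
  simp [walkChain, unitChain, Function.comp_def]

lemma walkChain_cons {x u y : V} (h : G.Adj x u) (p : G.Walk u y) :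
    walkChain G (.cons h p) = single (x, u) 1 + walkChain G p := by
  simp [walkChain_eq_unitChain]

lemma l1_walkChain {x y : V} (p : G.Walk x y) : l1 (walkChain G p) = p.length := by
  simp [walkChain_eq_unitChain, l1_unitChain]

lemma walkChain_nonneg {x y : V} (p : G.Walk x y) (e : V × V) : 0 ≤ walkChain G p e := by
  rw [walkChain_eq_unitChain]; exact unitChain_nonneg _ e

lemma intCoeffs_walkChain {x y : V} (p : G.Walk x y) : IntCoeffs (walkChain G p) := by
  classical
  exact fun e => ⟨_, by rw [walkChain_eq_unitChain, unitChain_apply]; rfl⟩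

lemma walkChain_apply_of_nodup [DecidableEq V] {x y : V} {p : G.Walk x y}
    (hp : (p.darts.map SimpleGraph.Dart.toProd).Nodup) (e : V × V) :
    walkChain G p e = if e ∈ p.darts.map SimpleGraph.Dart.toProd then 1 else 0 := by
  rw [walkChain_eq_unitChain, unitChain_apply]
  split_ifs with he
  · rw [List.count_eq_one_of_mem hp he, Nat.cast_one]
  · rw [List.count_eq_zero_of_not_mem he, Nat.cast_zero]

lemma adj_of_mem_support_walkChain {x y : V} (p : G.Walk x y) {e : V × V}
    (he : e ∈ (walkChain G p).support) : G.Adj e.1 e.2 := by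
  classical
  rw [Finsupp.mem_support_iff, walkChain_eq_unitChain, unitChain_apply, Nat.cast_ne_zero,
    ← Nat.pos_iff_ne_zero, List.count_pos_iff, List.mem_map] at he
  obtain ⟨d, -, rfl⟩ := he
  exact d.adj

@[simp] lemma bdry1_walkChain {x y : V} (p : G.Walk x y) :
    bdry1 (walkChain G p) = single y 1 - single x 1 := by
  induction p with
  | nil => simp [walkChain]
  | cons h p ih =>
    rw [walkChain_cons, map_add, ih, bdry1_single, one_smul]
    abel

noncomputable def cone (z : V) {x y : V} (p : G.Walk x y) : C2 V :=
  unitChain (p.darts.map fun d => (z, d.fst, d.snd))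

lemma bdry2_cone (z : V) {x y : V} (p : G.Walk x y) :
    bdry2 (cone z p) = walkChain G p - single (z, y) 1 + single (z, x) 1 := by
  induction p with
  | nil => simp [cone, walkChain]
  | cons h p ih =>
    rw [cone, SimpleGraph.Walk.darts_cons, List.map_cons, unitChain_cons, map_add,
      bdry2_single, ← cone, ih, walkChain_cons, one_smul]
    abel

lemma l1_cone (z : V) {x y : V} (p : G.Walk x y) : l1 (cone z p) = p.length := by
  simp [cone, l1_unitChain]

lemma cone_mem_C2R {R : ℕ} (hR : 1 ≤ R) {x y : V} (p : G.Walk x y) (hp : p.length ≤ R) :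
    cone x p ∈ C2R G R := by
  refine unitChain_mem_supported fun t ht => ?_
  obtain ⟨d, hd, rfl⟩ := List.mem_map.mp ht
  exact ⟨pairOK_of_mem_support (p.dart_fst_mem_support_of_mem_darts hd) hp,
    pairOK_of_mem_support (p.dart_snd_mem_support_of_mem_darts hd) hp, pairOK_of_adj hR d.adj⟩

end Walks

section GeodesicFilling

variable {G : SimpleGraph V} {R : ℕ}

lemma exists_walk_fillable_single_sub_walkChain (hR : 1 ≤ R) {x y : V}
    (h : pairOK G R x y) :
    ∃ γ : G.Walk x y, γ.length ≤ R ∧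
      Fillable G R (R + 1) (single (x, y) 1 - walkChain G γ) := by
  obtain ⟨γ, hγ⟩ := h.1.exists_walk_length_eq_dist
  have hγR : γ.length ≤ R := hγ ▸ h.2
  have hbdry : bdry2 (single (x, x, x) 1 - cone x γ) = single (x, y) 1 - walkChain G γ := by
    rw [map_sub, bdry2_cone, bdry2_single, one_smul]
    abel
  refine ⟨γ, hγR, hbdry ▸ (Fillable.of_bdry2 (sub_mem (single_self_mem_C2R x 1)
    (cone_mem_C2R hR γ hγR))).mono ?_⟩
  have : (γ.length : ℝ) ≤ R := by exact_mod_cast hγR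
  linarith [l1_sub_le (single (x, x, x) (1 : ℝ)) (cone x γ), l1_cone x γ,
    (l1_single (x, x, x) 1).trans abs_one]

lemma fillable_single_add_single_swap {x y : V} (h : pairOK G R x y) :
    Fillable G R 2 (single (x, y) 1 + single (y, x) 1) := by
  have hbdry : bdry2 (single (x, y, x) 1 + single (x, x, x) 1) =
      single (x, y) (1 : ℝ) + single (y, x) 1 := by
    rw [map_add, bdry2_single, bdry2_single, one_smul, one_smul]
    abel
  refine hbdry ▸ (Fillable.of_bdry2 (add_mem (single_mem_C2R h (pairOK_self x) h.symm 1)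
    (single_self_mem_C2R x 1))).mono ?_
  linarith [l1_add_le (single (x, y, x) (1 : ℝ)) (single (x, x, x) 1),
    (l1_single (x, y, x) 1).trans abs_one, (l1_single (x, x, x) 1).trans abs_one]

lemma exists_walk_fillable_single_sub (hR : 1 ≤ R) {t : V × V} (h : pairOK G R t.1 t.2)
    (r : ℝ) :
    ∃ (u v : V) (γ : G.Walk u v), γ.length ≤ R ∧
      Fillable G R ((R + 3) * |r|) (single t r - |r| • walkChain G γ) := by
  obtain ⟨x, y⟩ := t
  rcases le_or_gt 0 r with hr | hr
  · obtain ⟨γ, hγR, hγ⟩ := exists_walk_fillable_single_sub_walkChain hR h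
    refine ⟨x, y, γ, hγR, ?_⟩
    convert (hγ.smul r).mono (c' := (R + 3) * |r|) (by nlinarith [abs_nonneg r]) using 1
    rw [abs_of_nonneg hr, smul_sub, Finsupp.smul_single_one]
  · obtain ⟨γ, hγR, hγ⟩ := exists_walk_fillable_single_sub_walkChain hR h.symm
    refine ⟨y, x, γ, hγR, ?_⟩
    -- `-(x, y)` is homologous to the reversed edge `(y, x)`
    have := (hγ.sub (fillable_single_add_single_swap h)).smul |r|
    convert this.mono (c' := (R + 3) * |r|) (by rw [abs_abs]; nlinarith [abs_nonneg r]) using 1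
    rw [abs_of_neg hr, ← Finsupp.smul_single_one]
    module

end GeodesicFilling

section IntCoeffs

variable {α : Type*} {a b : α →₀ ℝ}

lemma IntCoeffs.add (ha : IntCoeffs a) (hb : IntCoeffs b) : IntCoeffs (a + b) := fun t => by
  obtain ⟨m, hm⟩ := ha t
  obtain ⟨n, hn⟩ := hb t
  exact ⟨m + n, by simp [hm, hn]⟩

lemma IntCoeffs.smul (ha : IntCoeffs a) (k : ℤ) : IntCoeffs ((k : ℝ) • a) := fun t => by
  obtain ⟨m, hm⟩ := ha t
  exact ⟨k * m, by simp [hm]⟩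

lemma IntCoeffs.sub (ha : IntCoeffs a) (hb : IntCoeffs b) : IntCoeffs (a - b) := by
  simpa [sub_eq_add_neg] using ha.add (hb.smul (-1))

lemma intCoeffs_single (t : α) (k : ℤ) : IntCoeffs (single t (k : ℝ)) := fun s => by
  classical
  exact ⟨if t = s then k else 0, by simp [Finsupp.single_apply]⟩

lemma IntCoeffs.exists_nat_eq (ha : IntCoeffs a) {t : α} (ht : 0 ≤ a t) : ∃ n : ℕ, a t = n := by
  obtain ⟨k, hk⟩ := ha t
  have hk0 : 0 ≤ k := by exact_mod_cast hk ▸ ht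
  exact ⟨k.toNat, by rw [hk]; exact_mod_cast (Int.toNat_of_nonneg hk0).symm⟩

lemma IntCoeffs.exists_nat_l1_eq (ha : IntCoeffs a) (hpos : ∀ t, 0 ≤ a t) :
    ∃ N : ℕ, l1 a = N := by
  choose n hn using fun t => ha.exists_nat_eq (hpos t)
  exact ⟨∑ t ∈ a.support, n t, by simp [l1, hn]⟩

end IntCoeffs

structure IsNonnegEdgeChain (G : SimpleGraph V) (d : C1 V) : Prop where
  nonneg : ∀ e, 0 ≤ d e
  adj : ∀ e ∈ d.support, G.Adj e.1 e.2

namespace IsNonnegEdgeChain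

variable {G : SimpleGraph V} {d d' : C1 V}

lemma zero : IsNonnegEdgeChain G 0 := ⟨fun _ => le_rfl, by simp⟩

lemma add (hd : IsNonnegEdgeChain G d) (hd' : IsNonnegEdgeChain G d') :
    IsNonnegEdgeChain G (d + d') where
  nonneg e := add_nonneg (hd.nonneg e) (hd'.nonneg e)
  adj e he := by
    classical
    exact (Finset.mem_union.mp (Finsupp.support_add he)).elim (hd.adj e) (hd'.adj e)

lemma smul {r : ℝ} (hr : 0 ≤ r) (hd : IsNonnegEdgeChain G d) : IsNonnegEdgeChain G (r • d) where
  nonneg e := mul_nonneg hr (hd.nonneg e)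
  adj e he := hd.adj e (Finsupp.support_smul he)

end IsNonnegEdgeChain

lemma isNonnegEdgeChain_walkChain {G : SimpleGraph V} {x y : V} (p : G.Walk x y) :
    IsNonnegEdgeChain G (walkChain G p) :=
  ⟨walkChain_nonneg p, fun _ => adj_of_mem_support_walkChain p⟩

lemma exists_isNonnegEdgeChain_fillable_sub {G : SimpleGraph V} {R : ℕ} (hR : 1 ≤ R)
    {b : C1 V} (hb : b ∈ C1R G R) :
    ∃ d, IsNonnegEdgeChain G d ∧ Fillable G R ((R + 3) * l1 b) (b - d) ∧
      l1 d ≤ R * l1 b ∧ (IntCoeffs b → IntCoeffs d) := by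
  classical
  induction b using Finsupp.induction with
  | zero => exact ⟨0, .zero, by simpa using Fillable.zero, by simp, fun _ _ => ⟨0, by simp⟩⟩
  | single_add t r f ht hr ih =>
    have hdisj : Disjoint (single t r).support f.support := by
      rwa [Finsupp.support_single t hr, Finset.disjoint_singleton_left]
    rw [C1R, Finsupp.mem_supported, Finsupp.support_add_eq hdisj, Finset.coe_union,
      Set.union_subset_iff, Finsupp.support_single t hr, Finset.coe_singleton,
      Set.singleton_subset_iff] at hb
    obtain ⟨d, hd, hfill, hl1, hint⟩ := ih hb.2
    obtain ⟨u, v, γ, hγR, hγ⟩ := exists_walk_fillable_single_sub hR hb.1 r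
    refine ⟨|r| • walkChain G γ + d,
      ((isNonnegEdgeChain_walkChain γ).smul (abs_nonneg r)).add hd, ?_, ?_, ?_⟩
    · rw [l1_add_of_disjoint hdisj, l1_single]
      convert hγ.add hfill using 1 <;> [ring; abel]
    · have : (γ.length : ℝ) ≤ R := by exact_mod_cast hγR
      rw [l1_add_of_disjoint hdisj, l1_single]
      refine (l1_add_le _ _).trans ?_
      rw [l1_smul, abs_abs, l1_walkChain]
      nlinarith [abs_nonneg r]
    · intro hbint
      obtain ⟨k, hk⟩ : ∃ k : ℤ, r = k := by
        simpa [Finsupp.notMem_support_iff.mp ht] using hbint t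
      have hf : IntCoeffs f := by
        have := hbint.sub (intCoeffs_single t k)
        rwa [← hk, add_sub_cancel_left] at this
      simpa [hk, ← Int.cast_abs] using ((intCoeffs_walkChain γ).smul |k|).add (hint hf)

lemma exists_mem_support_fst_eq_of_bdry1_eq_zero [DecidableEq V] {d : C1 V}
    (hpos : ∀ e, 0 ≤ d e) (hcyc : bdry1 d = 0) {p : V × V} (hp : p ∈ d.support) :
    ∃ z, (p.2, z) ∈ d.support := by
  by_contra! hout
  have hfst : ∀ t ∈ d.support, t.1 ≠ p.2 := fun t ht h => hout t.2 (h ▸ ht)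
  have : 0 < bdry1 d p.2 := by
    rw [bdry1_apply]
    refine Finset.sum_pos' (fun t ht => ?_) ⟨p, hp, ?_⟩
    · rw [if_neg (hfst t ht)]
      exact mul_nonneg (hpos t) (by split_ifs <;> norm_num)
    · rw [if_pos rfl, if_neg (hfst p hp)]
      simpa using (hpos p).lt_of_ne' (Finsupp.mem_support_iff.mp hp)
  simp [hcyc] at this

lemma exists_periodic_injOn {α : Type*} {f : ℕ → α} {s : Set α} (hs : s.Finite)
    (hf : ∀ n, f n ∈ s) :
    ∃ i m, 0 < m ∧ f (i + m) = f i ∧ ∀ a < m, ∀ b < m, f (i + a) = f (i + b) → a = b := by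
  classical
  have H : ∃ m, 0 < m ∧ ∃ i, f (i + m) = f i := by
    obtain ⟨k, l, hkl, hfkl⟩ := hs.exists_lt_map_eq_of_forall_mem hf
    exact ⟨l - k, by omega, k, by rw [Nat.add_sub_cancel' hkl.le, hfkl]⟩
  obtain ⟨hm, i, hi⟩ := Nat.find_spec H
  refine ⟨i, Nat.find H, hm, hi, fun a ha b hb hab => ?_⟩
  -- a repetition inside one period would give a shorter period
  by_contra hne
  wlog hlt : a < b generalizing a b
  · exact this b hb a ha hab.symm (Ne.symm hne) (by omega)
  exact Nat.find_min H (show b - a < Nat.find H by omega)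
    ⟨by omega, i + a, by rw [show i + a + (b - a) = i + b by omega, hab]⟩

lemma exists_walk_darts_eq {G : SimpleGraph V} (f : ℕ → V) (h : ∀ k, G.Adj (f k) (f (k + 1)))
    (i m : ℕ) :
    ∃ w : G.Walk (f i) (f (i + m)), w.darts.map SimpleGraph.Dart.toProd =
      (List.range m).map fun c => (f (i + c), f (i + c + 1)) := by
  induction m with
  | zero => exact ⟨.nil, by simp⟩
  | succ m ih =>
    obtain ⟨w, hw⟩ := ih
    exact ⟨w.concat (h (i + m)),
      by simp [SimpleGraph.Walk.darts_concat, hw, List.range_succ, add_assoc]⟩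

lemma exists_closed_walk_of_bdry1_eq_zero {G : SimpleGraph V} {d : C1 V}
    (hd : IsNonnegEdgeChain G d) (hcyc : bdry1 d = 0) (hd0 : d ≠ 0) :
    ∃ (x : V) (w : G.Walk x x), w.darts ≠ [] ∧ (w.darts.map SimpleGraph.Dart.toProd).Nodup ∧
      ∀ e ∈ w.darts.map SimpleGraph.Dart.toProd, e ∈ d.support := by
  classical
  obtain ⟨p₀, hp₀⟩ := Finsupp.support_nonempty_iff.mpr hd0
  -- follow outgoing edges of the support from `p₀.2`
  have : ∀ v, ∃ z, (∃ u, (u, v) ∈ d.support) → (v, z) ∈ d.support := fun v => by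
    by_cases h : ∃ u, (u, v) ∈ d.support
    · obtain ⟨u, hu⟩ := h
      obtain ⟨z, hz⟩ := exists_mem_support_fst_eq_of_bdry1_eq_zero hd.nonneg hcyc hu
      exact ⟨z, fun _ => hz⟩
    · exact ⟨v, fun h' => absurd h' h⟩
  choose next hnext using this
  set f : ℕ → V := fun k => next^[k] p₀.2
  have hf : ∀ k, (f k, f (k + 1)) ∈ d.support := by
    have hin : ∀ k, ∃ u, (u, f k) ∈ d.support := by
      intro k
      induction k with
      | zero => exact ⟨p₀.1, hp₀⟩
      | succ k ih => exact ⟨f k, by simpa [f, Function.iterate_succ_apply'] using hnext _ ih⟩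
    intro k
    simpa [f, Function.iterate_succ_apply'] using hnext _ (hin k)
  obtain ⟨i, m, hm, hper, hinj⟩ :=
    exists_periodic_injOn (d.support.image Prod.fst).finite_toSet
      fun k => Finset.mem_coe.mpr (Finset.mem_image_of_mem _ (hf k))
  obtain ⟨w, hw⟩ := exists_walk_darts_eq f (fun k => hd.adj _ (hf k)) i m
  refine ⟨f i, w.copy rfl hper, ?_, ?_, ?_⟩ <;>
    simp only [SimpleGraph.Walk.darts_copy]
  · intro hnil
    simpa [hnil, hm.ne] using congrArg List.length hw
  · rw [hw]
    refine List.nodup_range.map_on fun a ha b hb hab => ?_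
    exact hinj a (List.mem_range.mp ha) b (List.mem_range.mp hb) (congrArg Prod.fst hab)
  · rw [hw]
    intro e he
    obtain ⟨c, -, rfl⟩ := List.mem_map.mp he
    exact hf (i + c)

lemma IsNonnegEdgeChain.exists_sub_smul_walkChain {G : SimpleGraph V} {d : C1 V}
    (hd : IsNonnegEdgeChain G d) (hcyc : bdry1 d = 0) (hd0 : d ≠ 0) :
    ∃ (x : V) (w : G.Walk x x), ∃ e₀ ∈ d.support,
      IsNonnegEdgeChain G (d - d e₀ • walkChain G w) ∧ bdry1 (d - d e₀ • walkChain G w) = 0 ∧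
      (d - d e₀ • walkChain G w).support ⊂ d.support := by
  classical
  obtain ⟨x, w, hne, hnodup, hsupp⟩ := exists_closed_walk_of_bdry1_eq_zero hd hcyc hd0
  set L := w.darts.map SimpleGraph.Dart.toProd
  obtain ⟨e₀, he₀, hmin⟩ := L.toFinset.exists_min_image d (by simpa [L] using hne)
  rw [List.mem_toFinset] at he₀
  have happ : ∀ e, (d - d e₀ • walkChain G w) e = d e - d e₀ * if e ∈ L then 1 else 0 := by
    simp [walkChain_apply_of_nodup hnodup, L]
  have hsub : (d - d e₀ • walkChain G w).support ⊆ d.support := by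
    intro e he
    rw [Finsupp.mem_support_iff, happ] at he
    rw [Finsupp.mem_support_iff]
    intro hde
    rw [hde, if_neg fun heL => Finsupp.mem_support_iff.mp (hsupp e heL) hde] at he
    simp at he
  refine ⟨x, w, e₀, hsupp e₀ he₀, ⟨fun e => ?_, fun e he => hd.adj e (hsub he)⟩,
    by simp [hcyc], (Finset.ssubset_iff_of_subset hsub).mpr ⟨e₀, hsupp e₀ he₀, by simp [happ, he₀]⟩⟩
  rw [happ]
  split_ifs with he
  · linarith [hmin e (List.mem_toFinset.mpr he)]
  · linarith [hd.nonneg e]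

section Superadditive

variable {θ : ℕ → ℝ} (hnn : ∀ n, 0 ≤ θ n) (hsuper : ∀ r s : ℕ, θ r + θ s ≤ θ (r + s))
include hnn hsuper

lemma monotone_of_superadditive : Monotone θ := fun a b hab => by
  have := hsuper a (b - a)
  rw [Nat.add_sub_cancel' hab] at this
  linarith [hnn (b - a)]

lemma nsmul_le_of_superadditive (k s : ℕ) : k * θ s ≤ θ (k * s) := by
  induction k with
  | zero => simpa using hnn 0
  | succ k ih =>
    have := hsuper (k * s) s
    rw [← Nat.succ_mul] at this
    push_cast
    linarith

end Superadditive

variable {G : SimpleGraph V} {R : ℕ}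

lemma FinHomIsop.fillable {θ : ℕ → ℝ} (h : FinHomIsop G R θ) {x : V} (w : G.Walk x x) :
    Fillable G R (θ w.length) (walkChain G w) :=
  h x w

lemma mem_B1R_of_isNonnegEdgeChain
    (hwalk : ∀ (x : V) (w : G.Walk x x), walkChain G w ∈ B1R G R) {d : C1 V}
    (hd : IsNonnegEdgeChain G d) (hcyc : bdry1 d = 0) : d ∈ B1R G R := by
  induction hn : d.support.card using Nat.strong_induction_on generalizing d with
  | _ n ih =>
  rcases eq_or_ne d 0 with rfl | hd0
  · exact zero_mem _
  obtain ⟨x, w, e₀, -, hd', hcyc', hlt⟩ := hd.exists_sub_smul_walkChain hcyc hd0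
  have := add_mem (ih _ (hn ▸ Finset.card_lt_card hlt) hd' hcyc' rfl)
    (Submodule.smul_mem _ (d e₀) (hwalk x w))
  rwa [sub_add_cancel] at this

lemma fillable_of_isNonnegEdgeChain {θ : ℕ → ℝ} (hnn : ∀ n, 0 ≤ θ n)
    (hsuper : ∀ r s : ℕ, θ r + θ s ≤ θ (r + s)) (hfhif : FinHomIsop G R θ)
    {d : C1 V} (hd : IsNonnegEdgeChain G d) (hcyc : bdry1 d = 0) (hint : IntCoeffs d)
    {N : ℕ} (hN : l1 d = N) : Fillable G R (θ N) d := by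
  induction hn : d.support.card using Nat.strong_induction_on generalizing d N with
  | _ n ih =>
  rcases eq_or_ne d 0 with rfl | hd0
  · exact Fillable.zero.mono (hnn N)
  obtain ⟨x, w, e₀, -, hd', hcyc', hlt⟩ := hd.exists_sub_smul_walkChain hcyc hd0
  obtain ⟨k, hk⟩ := hint.exists_nat_eq (hd.nonneg e₀)
  have hint' : IntCoeffs (d - d e₀ • walkChain G w) := by
    simpa [hk] using hint.sub ((intCoeffs_walkChain w).smul k)
  obtain ⟨N', hN'⟩ := hint'.exists_nat_l1_eq hd'.nonneg
  have hmass : N' + k * w.length = N := by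
    have hsplit := l1_add_of_nonneg hd'.nonneg
      ((isNonnegEdgeChain_walkChain w).smul (hd.nonneg e₀)).nonneg
    rw [sub_add_cancel, l1_smul, l1_walkChain, hN, hN', hk, abs_of_nonneg k.cast_nonneg]
      at hsplit
    exact_mod_cast hsplit.symm
  have := (ih _ (hn ▸ Finset.card_lt_card hlt) hd' hcyc' hint' hN' rfl).add
    ((hfhif.fillable w).smul (d e₀))
  rw [sub_add_cancel] at this
  refine this.mono ?_
  rw [hk, abs_of_nonneg k.cast_nonneg, ← hmass]
  linarith [hsuper N' (k * w.length), nsmul_le_of_superadditive hnn hsuper k w.length]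

lemma exists_isNonnegEdgeChain_fillable_sub_of_bdry1_eq_zero (hR : 1 ≤ R) {b : C1 V}
    (hb : b ∈ C1R G R) (hcyc : bdry1 b = 0) :
    ∃ d, IsNonnegEdgeChain G d ∧ bdry1 d = 0 ∧ Fillable G R ((R + 3) * l1 b) (b - d) ∧
      l1 d ≤ R * l1 b ∧ (IntCoeffs b → IntCoeffs d) := by
  obtain ⟨d, hd, hfill, hl1, hint⟩ := exists_isNonnegEdgeChain_fillable_sub hR hb
  obtain ⟨a, -, ha⟩ := hfill.1
  refine ⟨d, hd, ?_, hfill, hl1, hint⟩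
  rw [← sub_sub_cancel b d, map_sub, ← ha, hcyc, bdry1_bdry2, sub_zero]

theorem fhif_upgrade_general (G : SimpleGraph V)
    (R₀ : ℕ) (hR₀ : 1 ≤ R₀) (θ₀ : ℕ → ℝ)
    (hnn : ∀ n, 0 ≤ θ₀ n)
    (hsuper : ∀ r s : ℕ, θ₀ r + θ₀ s ≤ θ₀ (r + s))
    (hfhif : FinHomIsop G R₀ θ₀) :
    ∀ R, R₀ ≤ R →
      (∀ b : C1 V, memC1R G R b → (∃ c : C2 V, bdry2 c = b) → memB1R G R b) ∧
      (∀ (b : C1 V) (n : ℕ), IntCoeffs b → l1 b = (n : ℝ) → memB1R G R b →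
        fillNorm G R b ≤ θ₀ (3 * (R * n)) + 5 * ((R : ℝ) * n)) := by
  intro R hR
  have hR1 : 1 ≤ R := hR₀.trans hR
  refine ⟨fun b hb ⟨c, hc⟩ => ?_, fun b n hint hn hbB => ?_⟩
  · obtain ⟨d, hd, hcyc, hfill, -⟩ :=
      exists_isNonnegEdgeChain_fillable_sub_of_bdry1_eq_zero hR1 hb (hc ▸ bdry1_bdry2 c)
    have hdB := B1R_mono hR (mem_B1R_of_isNonnegEdgeChain (fun x w => (hfhif x w).1) hd hcyc)
    have := add_mem hfill.1 hdB
    rwa [sub_add_cancel] at this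
  · have hb := B1R_le_C1R hbB
    obtain ⟨c, -, hc⟩ := hbB
    obtain ⟨d, hd, hcyc, hfill, hl1, hdint⟩ :=
      exists_isNonnegEdgeChain_fillable_sub_of_bdry1_eq_zero hR1 hb (hc ▸ bdry1_bdry2 c)
    obtain ⟨N, hN⟩ := (hdint hint).exists_nat_l1_eq hd.nonneg
    have hNle : N ≤ 3 * (R * n) := by
      have : (N : ℝ) ≤ R * n := hN ▸ hn ▸ hl1
      have : N ≤ R * n := by exact_mod_cast this
      omega
    have hdfill := (fillable_of_isNonnegEdgeChain hnn hsuper hfhif hd hcyc (hdint hint) hN).of_le hR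
    have := (hfill.add hdfill).2
    rw [sub_add_cancel, hn] at this
    have hR1' : (1 : ℝ) ≤ R := by exact_mod_cast hR1
    nlinarith [monotone_of_superadditive hnn hsuper hNle, n.cast_nonneg (α := ℝ)]

/-- upgrading a finite homological isoperimetric function with
super-additive θ₀. For R ≥ R₀: (1) 1-cycles in C₁^R that are boundaries lie
in B₁^R; (2) integral b ∈ B₁^R satisfy ‖b‖_F^R ≤ θ₀(3·R·‖b‖₁) + 5·R·‖b‖₁. -/
theorem fhif_upgrade (G : SimpleGraph V) (hconn : G.Connected)
    (R₀ : ℕ) (hR₀ : 1 ≤ R₀) (θ₀ : ℕ → ℝ)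
    (hnn : ∀ n, 0 ≤ θ₀ n)
    (hsuper : ∀ r s : ℕ, θ₀ r + θ₀ s ≤ θ₀ (r + s))
    (hfhif : FinHomIsop G R₀ θ₀) :
    ∀ R, R₀ ≤ R →
      (∀ b : C1 V, memC1R G R b → (∃ c : C2 V, bdry2 c = b) → memB1R G R b) ∧
      (∀ (b : C1 V) (n : ℕ), IntCoeffs b → l1 b = (n : ℝ) → memB1R G R b →
        fillNorm G R b ≤ θ₀ (3 * (R * n)) + 5 * ((R : ℝ) * n)) :=
  fhif_upgrade_general G R₀ hR₀ θ₀ hnn hsuper hfhif
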